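/- For every natural number k and all natural numbers m, m' with m ≤ k and m' ≤ k, the orthogonality relation Σ_{α=0}^{k} α!·(k−α)!·S_{k,m}(α)·S_{k,m'}(α) = 2^k · m! · (k−m)! · δ_{m,m'} holds, where δ_{m,m'} is 1 if m = m' and 0 otherwise. (Equivalently, the eigenvectors (c†)^m (d†)^{k−m}|1⟩ of the dimer hopping Hamiltonian are pairwise orthogonal with squared norm m!(k−m)!.) -/
import Mathlib

/-- The integer coefficient `S_{k,m}(α) = Σ_{j=0}^{m} (−1)^{k+m+α+j} C(m,j) C(k−m, α−j)`,
with the binomial coefficient taken to be `0` when the lower index is out of range. -/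
def Scoef (k m α : ℕ) : ℤ :=
  ∑ j ∈ Finset.range (m+1),
    if j ≤ α then (-1 : ℤ)^(k+m+α+j) * (m.choose j) * ((k-m).choose (α - j)) else 0

namespace ScoefAux

open Finset Polynomial

lemma weight_swap {k m α j : ℕ} (hm : m ≤ k) (hα : α ≤ k) (hj : j ≤ m) (hj' : j ≤ α) :
    α.factorial * (k-α).factorial * (m.choose j * (k-m).choose (α-j))
  = m.factorial * (k-m).factorial * (α.choose j * (k-α).choose (m-j)) := by
  rcases le_or_gt (α - j) (k - m) with h | h
  · have h2 : m - j ≤ k - α := by omega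
    have h1 : (k-m) - (α-j) = (k-α) - (m-j) := by omega
    have e1 := Nat.choose_mul_factorial_mul_factorial hj
    have e2 := Nat.choose_mul_factorial_mul_factorial h
    have e3 := Nat.choose_mul_factorial_mul_factorial hj'
    have e4 := Nat.choose_mul_factorial_mul_factorial h2
    rw [h1] at e2
    have Ppos : 0 < j.factorial * (m-j).factorial * (α-j).factorial * ((k-α)-(m-j)).factorial :=
      Nat.mul_pos (Nat.mul_pos (Nat.mul_pos (Nat.factorial_pos _) (Nat.factorial_pos _))
        (Nat.factorial_pos _)) (Nat.factorial_pos _)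
    apply Nat.eq_of_mul_eq_mul_right Ppos
    calc α.factorial * (k-α).factorial * (m.choose j * (k-m).choose (α-j)) *
          (j.factorial * (m-j).factorial * (α-j).factorial * ((k-α)-(m-j)).factorial)
        = (α.factorial * (k-α).factorial) * ((m.choose j * j.factorial * (m-j).factorial) *
            ((k-m).choose (α-j) * (α-j).factorial * ((k-α)-(m-j)).factorial)) := by ring
      _ = (α.factorial * (k-α).factorial) * (m.factorial * (k-m).factorial) := by rw [e1, e2]
      _ = (m.factorial * (k-m).factorial) * ((α.choose j * j.factorial * (α-j).factorial) *
            ((k-α).choose (m-j) * (m-j).factorial * ((k-α)-(m-j)).factorial)) := by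
            rw [e3, e4]; ring
      _ = _ := by ring
  · have z1 : (k-m).choose (α-j) = 0 := Nat.choose_eq_zero_of_lt h
    have z2 : (k-α).choose (m-j) = 0 := Nat.choose_eq_zero_of_lt (by omega)
    rw [z1, z2]; ring

lemma one_sub_X_pow (n : ℕ) :
    (1 - X : Polynomial ℤ) ^ n = ∑ j ∈ range (n+1), C ((-1)^j * (n.choose j : ℤ)) * X ^ j := by
  rw [sub_eq_add_neg, add_comm, add_pow]
  refine Finset.sum_congr rfl fun j _ => ?_
  rw [neg_pow, one_pow]
  simp only [map_mul, map_pow, map_neg, map_one, C_eq_natCast]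
  ring

lemma coeff_one_sub_X_pow (n t : ℕ) :
    ((1 - X : Polynomial ℤ) ^ n).coeff t = (-1)^t * n.choose t := by
  rw [one_sub_X_pow, finset_sum_coeff]
  simp only [coeff_C_mul, coeff_X_pow, mul_ite, mul_one, mul_zero]
  rw [Finset.sum_ite_eq (range (n+1)) t]
  by_cases h : t ∈ range (n+1)
  · simp [h]
  · simp only [h, if_false]
    rw [Nat.choose_eq_zero_of_lt (by simpa using h)]
    simp

lemma sum_shift {M : Type*} [AddCommMonoid M] (n i : ℕ) (f : ℕ → M) :
    (∑ α ∈ range n, if i ≤ α then f α else 0) = ∑ β ∈ range (n - i), f (i + β) := by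
  rw [← Finset.sum_filter]
  have hf : (range n).filter (fun α => i ≤ α) = Finset.Ico i n := by
    ext a; simp [Finset.mem_Ico]; omega
  rw [hf, Finset.sum_Ico_eq_sum_range]

lemma key_poly (k m' : ℕ) (hm' : m' ≤ k) :
    ∑ α ∈ range (k+1), C (∑ i ∈ range (m'+1),
        if i ≤ α then (-1:ℤ)^i * (m'.choose i) * ((k-m').choose (α-i)) else 0)
      * ((1 - X)^α * (1 + X)^(k-α))
    = C ((2:ℤ)^k) * X ^ m' := by
  have step1 : ∀ α, C (∑ i ∈ range (m'+1),
        if i ≤ α then (-1:ℤ)^i * (m'.choose i) * ((k-m').choose (α-i)) else 0)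
      * ((1 - X)^α * (1 + X)^(k-α))
      = ∑ i ∈ range (m'+1), if i ≤ α then
          C ((-1:ℤ)^i * (m'.choose i) * ((k-m').choose (α-i))) * ((1 - X)^α * (1 + X)^(k-α))
        else 0 := by
    intro α
    rw [map_sum, Finset.sum_mul]
    refine Finset.sum_congr rfl fun i _ => ?_
    split <;> simp
  calc ∑ α ∈ range (k+1), C (∑ i ∈ range (m'+1),
        if i ≤ α then (-1:ℤ)^i * (m'.choose i) * ((k-m').choose (α-i)) else 0)
      * ((1 - X)^α * (1 + X)^(k-α))
      = ∑ α ∈ range (k+1), ∑ i ∈ range (m'+1), if i ≤ α then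
          C ((-1:ℤ)^i * (m'.choose i) * ((k-m').choose (α-i)))
            * ((1 - X)^α * (1 + X)^(k-α)) else 0 :=
        Finset.sum_congr rfl fun α _ => step1 α
    _ = ∑ i ∈ range (m'+1), ∑ α ∈ range (k+1), if i ≤ α then
          C ((-1:ℤ)^i * (m'.choose i) * ((k-m').choose (α-i)))
            * ((1 - X)^α * (1 + X)^(k-α)) else 0 := Finset.sum_comm
    _ = ∑ i ∈ range (m'+1), ∑ β ∈ range (k+1-i),
          C ((-1:ℤ)^i * (m'.choose i) * ((k-m').choose (i+β-i)))
            * ((1 - X)^(i+β) * (1 + X)^(k-(i+β))) :=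
        Finset.sum_congr rfl fun i _ => sum_shift (k+1) i _
    _ = ∑ i ∈ range (m'+1), ∑ β ∈ range (k-m'+1),
          C ((-1:ℤ)^i * (m'.choose i) * ((k-m').choose β))
            * ((1 - X)^(i+β) * (1 + X)^(k-(i+β))) := by
        refine Finset.sum_congr rfl fun i hi => ?_
        simp only [Nat.add_sub_cancel_left]
        symm
        apply Finset.sum_subset
        · apply Finset.range_subset_range.2
          simp only [Finset.mem_range] at hi; omega
        · intro β hβ hnβ
          simp only [Finset.mem_range] at hβ hnβ
          rw [show (k-m').choose β = 0 from Nat.choose_eq_zero_of_lt (by omega)]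
          simp
    _ = ∑ i ∈ range (m'+1), ∑ β ∈ range (k-m'+1),
          (C ((-1:ℤ)^i * (m'.choose i)) * ((1 - X)^i * (1 + X)^(m'-i)))
          * (C (((k-m').choose β : ℤ)) * ((1 - X)^β * (1 + X)^((k-m')-β))) := by
        refine Finset.sum_congr rfl fun i hi => Finset.sum_congr rfl fun β hβ => ?_
        simp only [Finset.mem_range] at hi hβ
        have h1 : k - (i+β) = (m'-i) + ((k-m')-β) := by omega
        rw [h1, pow_add, pow_add, map_mul]
        ring
    _ = (∑ i ∈ range (m'+1), C ((-1:ℤ)^i * (m'.choose i)) * ((1 - X)^i * (1 + X)^(m'-i)))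
        * (∑ β ∈ range (k-m'+1), C (((k-m').choose β : ℤ)) * ((1 - X)^β * (1 + X)^((k-m')-β))) :=
        (Finset.sum_mul_sum _ _ _ _).symm
    _ = ((2:Polynomial ℤ) * X)^(m') * (2:Polynomial ℤ)^(k-m') := by
        congr 1
        · rw [show ((2:Polynomial ℤ) * X) = (-(1-X)) + (1+X) by ring, add_pow]
          refine Finset.sum_congr rfl fun i _ => ?_
          have hn : (-(1-X) : Polynomial ℤ)^i = C ((-1:ℤ)^i) * (1-X)^i := by
            rw [neg_pow]; simp
          rw [hn]
          simp only [map_mul, map_pow, map_neg, map_one, C_eq_natCast]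
          ring
        · rw [show (2:Polynomial ℤ) = (1-X) + (1+X) by ring, add_pow]
          refine Finset.sum_congr rfl fun β _ => ?_
          simp only [C_eq_natCast]
          ring
    _ = C ((2:ℤ)^k) * X ^ m' := by
        have hk : m' + (k - m') = k := by omega
        calc ((2:Polynomial ℤ)*X)^m' * 2^(k-m') = (2^m' * 2^(k-m')) * X^m' := by ring
          _ = 2^k * X^m' := by rw [← pow_add, hk]
          _ = C ((2:ℤ)^k) * X^m' := by rw [map_pow, show (C (2:ℤ)) = 2 by norm_num]

lemma key_scalar (k m m' : ℕ) (hm' : m' ≤ k) :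
    (∑ α ∈ range (k+1),
      (∑ i ∈ range (m'+1), if i ≤ α then (-1:ℤ)^i * (m'.choose i) * ((k-m').choose (α-i)) else 0)
      * (∑ j ∈ range (m+1), if j ≤ α then (-1:ℤ)^j * (α.choose j) * ((k-α).choose (m-j)) else 0))
    = if m = m' then 2^k else 0 := by
  have coeffQ : ∀ α, (((1-X)^α * (1+X)^(k-α) : Polynomial ℤ)).coeff m
      = ∑ j ∈ range (m+1), (-1:ℤ)^j * (α.choose j) * ((k-α).choose (m-j)) := by
    intro α
    rw [coeff_mul, Finset.Nat.sum_antidiagonal_eq_sum_range_succ_mk]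
    refine Finset.sum_congr rfl fun j _ => ?_
    rw [coeff_one_sub_X_pow, coeff_one_add_X_pow]
  calc (∑ α ∈ range (k+1),
      (∑ i ∈ range (m'+1), if i ≤ α then (-1:ℤ)^i * (m'.choose i) * ((k-m').choose (α-i)) else 0)
      * (∑ j ∈ range (m+1), if j ≤ α then (-1:ℤ)^j * (α.choose j) * ((k-α).choose (m-j)) else 0))
      = ∑ α ∈ range (k+1),
        (∑ i ∈ range (m'+1), if i ≤ α then (-1:ℤ)^i * (m'.choose i) * ((k-m').choose (α-i)) else 0)
        * (((1-X)^α * (1+X)^(k-α) : Polynomial ℤ)).coeff m := by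
        refine Finset.sum_congr rfl fun α _ => ?_
        rw [coeffQ α]
        congr 1
        refine Finset.sum_congr rfl fun j _ => ?_
        by_cases hj : j ≤ α
        · rw [if_pos hj]
        · rw [if_neg hj, Nat.choose_eq_zero_of_lt (show α < j by omega)]
          push_cast
          ring
    _ = ∑ α ∈ range (k+1),
        (C (∑ i ∈ range (m'+1),
            if i ≤ α then (-1:ℤ)^i * (m'.choose i) * ((k-m').choose (α-i)) else 0)
          * ((1-X)^α * (1+X)^(k-α))).coeff m := by
        simp only [coeff_C_mul]
    _ = (C ((2:ℤ)^k) * X ^ m').coeff m := by rw [← finset_sum_coeff, key_poly k m' hm']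
    _ = if m = m' then 2^k else 0 := by
        rw [coeff_C_mul, coeff_X_pow]
        by_cases h : m = m' <;> simp [h, eq_comm]

lemma Scoef_eq (k m α : ℕ) : Scoef k m α = (-1:ℤ)^(k+m+α) *
    ∑ j ∈ range (m+1), (if j ≤ α then (-1:ℤ)^j * (m.choose j) * ((k-m).choose (α-j)) else 0) := by
  unfold Scoef
  rw [Finset.mul_sum]
  refine Finset.sum_congr rfl fun j _ => ?_
  split
  · rw [pow_add]; ring
  · simp

lemma wA (k m α : ℕ) (hm : m ≤ k) (hα : α ≤ k) :
    (α.factorial * (k-α).factorial : ℤ) *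
      (∑ j ∈ range (m+1), if j ≤ α then (-1:ℤ)^j * (m.choose j) * ((k-m).choose (α-j)) else 0)
  = (m.factorial * (k-m).factorial : ℤ) *
      (∑ j ∈ range (m+1), if j ≤ α then (-1:ℤ)^j * (α.choose j) * ((k-α).choose (m-j)) else 0) := by
  rw [Finset.mul_sum, Finset.mul_sum]
  refine Finset.sum_congr rfl fun j hj => ?_
  simp only [Finset.mem_range] at hj
  by_cases h : j ≤ α
  · rw [if_pos h, if_pos h]
    have hz : (α.factorial * (k-α).factorial : ℤ) * ((m.choose j : ℤ) * ((k-m).choose (α-j)))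
        = (m.factorial * (k-m).factorial : ℤ) * ((α.choose j : ℤ) * ((k-α).choose (m-j))) := by
      exact_mod_cast weight_swap (k:=k) (m:=m) (α:=α) (j:=j) hm hα (by omega) h
    calc (α.factorial * (k-α).factorial : ℤ) * ((-1:ℤ)^j * (m.choose j) * ((k-m).choose (α-j)))
        = (-1:ℤ)^j * ((α.factorial * (k-α).factorial : ℤ) *
            ((m.choose j:ℤ) * ((k-m).choose (α-j)))) := by ring
      _ = (-1:ℤ)^j * ((m.factorial * (k-m).factorial : ℤ) *
            ((α.choose j:ℤ) * ((k-α).choose (m-j)))) := by rw [hz]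
      _ = _ := by ring
  · rw [if_neg h, if_neg h, mul_zero, mul_zero]

end ScoefAux

open Finset ScoefAux in
/-- Orthogonality of the eigenvectors of the dimer hopping Hamiltonian:
`Σ_{α=0}^{k} α!(k−α)! S_{k,m}(α) S_{k,m'}(α) = 2^k m!(k−m)! δ_{m,m'}`. -/
theorem Scoef_orthogonality (k m m' : ℕ) (hm : m ≤ k) (hm' : m' ≤ k) :
    ∑ α ∈ Finset.range (k+1),
        (α.factorial * (k - α).factorial : ℤ) * Scoef k m α * Scoef k m' α
      = if m = m' then (2 ^ k * m.factorial * (k - m).factorial : ℤ) else 0 := by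
  have main : ∀ α ∈ range (k+1),
      (α.factorial * (k - α).factorial : ℤ) * Scoef k m α * Scoef k m' α
      = (-1:ℤ)^(m+m') * ((m.factorial * (k-m).factorial : ℤ) *
          ((∑ i ∈ range (m'+1),
              if i ≤ α then (-1:ℤ)^i * (m'.choose i) * ((k-m').choose (α-i)) else 0)
           * (∑ j ∈ range (m+1),
              if j ≤ α then (-1:ℤ)^j * (α.choose j) * ((k-α).choose (m-j)) else 0))) := by
    intro α hα
    simp only [Finset.mem_range] at hα
    have hαk : α ≤ k := by omega
    have sgn : ((-1:ℤ)^(k+m+α)) * ((-1:ℤ)^(k+m'+α)) = (-1:ℤ)^(m+m') := by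
      rw [← pow_add, show (k+m+α)+(k+m'+α) = (m+m') + 2*(k+α) by ring, pow_add, pow_mul]
      norm_num
    calc (α.factorial * (k - α).factorial : ℤ) * Scoef k m α * Scoef k m' α
        = (((-1:ℤ)^(k+m+α)) * ((-1:ℤ)^(k+m'+α))) *
            (((α.factorial * (k - α).factorial : ℤ) *
              (∑ j ∈ range (m+1),
                if j ≤ α then (-1:ℤ)^j * (m.choose j) * ((k-m).choose (α-j)) else 0)) *
             (∑ i ∈ range (m'+1),
                if i ≤ α then (-1:ℤ)^i * (m'.choose i) * ((k-m').choose (α-i)) else 0)) := by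
          rw [Scoef_eq k m α, Scoef_eq k m' α]; ring
      _ = (-1:ℤ)^(m+m') *
            (((m.factorial * (k-m).factorial : ℤ) *
              (∑ j ∈ range (m+1),
                if j ≤ α then (-1:ℤ)^j * (α.choose j) * ((k-α).choose (m-j)) else 0)) *
             (∑ i ∈ range (m'+1),
                if i ≤ α then (-1:ℤ)^i * (m'.choose i) * ((k-m').choose (α-i)) else 0)) := by
          rw [sgn, wA k m α hm hαk]
      _ = _ := by ring
  rw [Finset.sum_congr rfl main, ← Finset.mul_sum, ← Finset.mul_sum, key_scalar k m m' hm']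
  by_cases h : m = m'
  · subst h
    simp only [if_pos rfl]
    rw [show m+m = 2*m by ring, pow_mul]
    norm_num
    ring
  · simp [h]
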